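/- Let M ⊆ B(H) be a von Neumann algebra with the property that every element of M admits a polar decomposition with unitary part in M (e.g., M finite). Let (a_n) be a sequence in M with ‖a_n‖ ≤ 1 such that a_n* a_n → 1 in the strong operator topology. Then there exist unitaries u_n ∈ M such that u_n − a_n → 0 in the strong operator topology. -/

import Mathlib

open Filter ContinuousLinearMap RCLike

open scoped InnerProductSpace in
private lemma aux_unitary_norm {H : Type*} [NormedAddCommGroup H] [InnerProductSpace ℂ H]
    [CompleteSpace H] {u : H →L[ℂ] H} (hu : u ∈ unitary (H →L[ℂ] H)) (x : H) :
    ‖u x‖ = ‖x‖ := by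
  have h1 : star u * u = 1 := hu.1
  have : ‖u x‖ ^ 2 = ‖x‖ ^ 2 := by
    rw [← inner_self_eq_norm_sq (𝕜 := ℂ) (u x), ← inner_self_eq_norm_sq (𝕜 := ℂ) x]
    have : ⟪u x, u x⟫_ℂ = ⟪x, (star u * u) x⟫_ℂ := by
      rw [ContinuousLinearMap.mul_apply, star_eq_adjoint, adjoint_inner_right]
    rw [this, h1, ContinuousLinearMap.one_apply]
  nlinarith [norm_nonneg (u x), norm_nonneg x]

open scoped InnerProductSpace in
/-- Let `M ⊆ B(H)` be a von Neumann algebra in which every element admits a polar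
decomposition with unitary part in `M` (e.g. `M` finite). If `(aₙ)` is a sequence
in `M` with `‖aₙ‖ ≤ 1` and `aₙ* aₙ → 1` strongly, then there are unitaries
`uₙ ∈ M` with `uₙ − aₙ → 0` strongly. -/
theorem stmt8 {H : Type*} [NormedAddCommGroup H] [InnerProductSpace ℂ H] [CompleteSpace H]
    (M : VonNeumannAlgebra H)
    (hpolar : ∀ a ∈ M, ∃ u r : H →L[ℂ] H, u ∈ M ∧ u ∈ unitary (H →L[ℂ] H) ∧
      0 ≤ r ∧ r * r = star a * a ∧ a = u * r)
    (a : ℕ → H →L[ℂ] H) (haM : ∀ n, a n ∈ M) (hnorm : ∀ n, ‖a n‖ ≤ 1)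
    (hconv : ∀ ξ : H, Tendsto (fun n => (star (a n) * a n) ξ) atTop (nhds ξ)) :
    ∃ u : ℕ → H →L[ℂ] H, (∀ n, u n ∈ M ∧ u n ∈ unitary (H →L[ℂ] H)) ∧
      ∀ ξ : H, Tendsto (fun n => (u n - a n) ξ) atTop (nhds 0) := by
  choose u r huM huU hrpos hrsq hdecomp using fun n => hpolar (a n) (haM n)
  refine ⟨u, fun n => ⟨huM n, huU n⟩, fun ξ => ?_⟩
  -- self-adjointness of r n
  have hsa : ∀ n, IsSelfAdjoint (r n) := fun n => IsSelfAdjoint.of_nonneg (hrpos n)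
  -- r n ≤ 1
  have hr1 : ∀ n, r n ≤ 1 := by
    intro n
    rw [← CStarAlgebra.norm_le_one_iff_of_nonneg (r n) (hrpos n)]
    have h2 : ‖r n‖ * ‖r n‖ = ‖r n * r n‖ := by
      calc ‖r n‖ * ‖r n‖ = ‖star (r n) * r n‖ := (CStarRing.norm_star_mul_self).symm
        _ = ‖r n * r n‖ := by rw [(hsa n).star_eq]
    have h3 : ‖r n * r n‖ ≤ 1 := by
      rw [hrsq n]
      calc ‖star (a n) * a n‖ ≤ ‖star (a n)‖ * ‖a n‖ := norm_mul_le _ _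
        _ ≤ 1 * 1 := by
            rw [norm_star]
            exact mul_le_mul (hnorm n) (hnorm n) (norm_nonneg _) zero_le_one
        _ = 1 := one_mul 1
    nlinarith [norm_nonneg (r n)]
  -- r n * r n ≤ r n
  have hsq_le : ∀ n, r n * r n ≤ r n := by
    intro n
    have := CStarAlgebra.pow_antitone (hrpos n) (hr1 n) (show (1:ℕ) ≤ 2 by norm_num)
    simpa [pow_succ, pow_one] using this
  -- limit of re ⟪(a* a) ξ, ξ⟫
  have hA : Tendsto (fun n => re ⟪(star (a n) * a n) ξ, ξ⟫_ℂ) atTop (nhds (‖ξ‖ ^ 2)) := by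
    have : Tendsto (fun n => ⟪(star (a n) * a n) ξ, ξ⟫_ℂ) atTop (nhds ⟪ξ, ξ⟫_ℂ) :=
      ((continuous_id.inner continuous_const).tendsto ξ).comp (hconv ξ)
    have h := (RCLike.continuous_re.tendsto _).comp this
    rw [show re ⟪ξ, ξ⟫_ℂ = ‖ξ‖ ^ 2 from inner_self_eq_norm_sq ξ] at h
    exact h
  -- squeeze for re ⟪r ξ, ξ⟫
  have hRe : Tendsto (fun n => re ⟪(r n) ξ, ξ⟫_ℂ) atTop (nhds (‖ξ‖ ^ 2)) := by
    refine tendsto_of_tendsto_of_tendsto_of_le_of_le hA tendsto_const_nhds ?_ ?_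
    · intro n
      show re ⟪(star (a n) * a n) ξ, ξ⟫_ℂ ≤ re ⟪(r n) ξ, ξ⟫_ℂ
      have hpos := ((le_def _ _).mp (hsq_le n)).inner_nonneg_left ξ
      have heq : re ⟪(r n) ξ, ξ⟫_ℂ - re ⟪(r n * r n) ξ, ξ⟫_ℂ = re ⟪((r n - r n * r n)) ξ, ξ⟫_ℂ := by
        simp [inner_sub_left]
      rw [← hrsq n]
      linarith [(RCLike.nonneg_iff.mp hpos).1, heq]
    · intro n
      show re ⟪(r n) ξ, ξ⟫_ℂ ≤ ‖ξ‖ ^ 2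
      have hpos := ((le_def _ _).mp (hr1 n)).inner_nonneg_left ξ
      have heq : re ⟪ξ, ξ⟫_ℂ - re ⟪(r n) ξ, ξ⟫_ℂ = re ⟪((1 - r n)) ξ, ξ⟫_ℂ := by
        simp [inner_sub_left]
      have h2 : re ⟪ξ, ξ⟫_ℂ = ‖ξ‖ ^ 2 := inner_self_eq_norm_sq ξ
      linarith [(RCLike.nonneg_iff.mp hpos).1, heq]
  -- limit of ‖r ξ‖ ^ 2
  have hN : Tendsto (fun n => ‖(r n) ξ‖ ^ 2) atTop (nhds (‖ξ‖ ^ 2)) := by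
    have key : ∀ n, ‖(r n) ξ‖ ^ 2 = re ⟪(star (a n) * a n) ξ, ξ⟫_ℂ := by
      intro n
      rw [← inner_self_eq_norm_sq (𝕜 := ℂ)]
      congr 1
      calc ⟪(r n) ξ, (r n) ξ⟫_ℂ = ⟪(r n) ξ, (adjoint (r n)) ξ⟫_ℂ := by
            rw [(hsa n).adjoint_eq]
        _ = ⟪(r n) ((r n) ξ), ξ⟫_ℂ := adjoint_inner_right _ _ _
        _ = ⟪(r n * r n) ξ, ξ⟫_ℂ := rfl
        _ = ⟪(star (a n) * a n) ξ, ξ⟫_ℂ := by rw [hrsq n]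
    simpa only [key] using hA
  -- ‖ξ - r n ξ‖ ^ 2 → 0
  have hkey : Tendsto (fun n => ‖ξ - (r n) ξ‖ ^ 2) atTop (nhds 0) := by
    have expand : ∀ n, ‖ξ - (r n) ξ‖ ^ 2
        = ‖ξ‖ ^ 2 - 2 * re ⟪(r n) ξ, ξ⟫_ℂ + ‖(r n) ξ‖ ^ 2 := by
      intro n
      rw [norm_sub_sq (𝕜 := ℂ), inner_re_symm]
    simp only [expand]
    have := (hRe.const_mul 2).neg.add hN |>.const_add (‖ξ‖ ^ 2)
    have h0 : ‖ξ‖ ^ 2 + (-(2 * ‖ξ‖ ^ 2) + ‖ξ‖ ^ 2) = 0 := by ring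
    rw [h0] at this
    convert this using 2 with n
    ring
  -- conclude
  rw [tendsto_zero_iff_norm_tendsto_zero]
  have heq : ∀ n, ‖(u n - a n) ξ‖ = ‖ξ - (r n) ξ‖ := by
    intro n
    have : (u n - a n) ξ = (u n) (ξ - (r n) ξ) := by
      rw [hdecomp n]
      simp [map_sub, mul_apply]
    rw [this, aux_unitary_norm (huU n)]
  simp only [heq]
  have : Tendsto (fun n => Real.sqrt (‖ξ - (r n) ξ‖ ^ 2)) atTop (nhds (Real.sqrt 0)) :=
    (Real.continuous_sqrt.tendsto 0).comp hkey
  simpa [Real.sqrt_sq (norm_nonneg _)] using this
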